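/- arXiv:2205.04443 — 3 statements merged into one kernel-verified Lean document; each statement's English description precedes it below -/
import Mathlib

section
/- Let V be a finite-dimensional real vector space, W ⊂ V a codimension-one subspace, and T : V → V a linear map whose image is contained in W. Let S : W → W be the restriction of T to W. Then S has no real eigenvalues if and only if the only real eigenvalue of T is 0 and it has algebraic multiplicity one. -/
/-!
Writing `T = ι ∘ A` with `A : V → W` the corestriction and `ι : W → V` the inclusion, we have
`S = A ∘ ι`. The characteristic polynomials of `ι ∘ A` and `A ∘ ι` agree up to a power of `X`
accounting for the difference of dimensions, so `χ_T = χ_S · X`. The eigenvalues are the roots of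
the characteristic polynomials, and `χ_S · X` has `0` as its only root, a simple one, exactly when
`χ_S` has no roots.
-/

open Polynomial Module

theorem LinearMap.X_pow_finrank_mul_charpoly_comp_comm {R M N : Type*} [CommRing R]
    [StrongRankCondition R] [AddCommGroup M] [Module R M] [Free R M] [Module.Finite R M]
    [AddCommGroup N] [Module R N] [Free R N] [Module.Finite R N]
    (f : M →ₗ[R] N) (g : N →ₗ[R] M) :
    X ^ finrank R N * (g ∘ₗ f).charpoly = X ^ finrank R M * (f ∘ₗ g).charpoly := by
  let bM := Free.chooseBasis R M
  let bN := Free.chooseBasis R N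
  rw [← charpoly_toMatrix (g ∘ₗ f) bM, ← charpoly_toMatrix (f ∘ₗ g) bN,
    toMatrix_comp bM bN bM, toMatrix_comp bN bM bN, finrank_eq_card_chooseBasisIndex,
    finrank_eq_card_chooseBasisIndex, Matrix.charpoly_mul_comm']

theorem LinearMap.charpoly_eq_charpoly_restrict_mul_X {K V : Type*} [Field K] [AddCommGroup V]
    [Module K V] [FiniteDimensional K V] {W : Submodule K V}
    (hW : finrank K W + 1 = finrank K V) (T : V →ₗ[K] V) (hT : ∀ x, T x ∈ W) :
    T.charpoly = (T.restrict fun x _ => hT x).charpoly * X := by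
  have h : X ^ finrank K W * T.charpoly =
      X ^ finrank K V * (T.restrict fun x _ => hT x).charpoly :=
    X_pow_finrank_mul_charpoly_comp_comm (T.codRestrict W hT) W.subtype
  rw [← hW, pow_succ, mul_assoc] at h
  rw [(isRegular_X_pow _).left h, mul_comm]

theorem Polynomial.forall_not_isRoot_iff_mul_X {R : Type*} [CommRing R] [IsDomain R] {p : R[X]}
    (hp : p ≠ 0) :
    (∀ μ, ¬ p.IsRoot μ) ↔ (∀ μ, (p * X).IsRoot μ ↔ μ = 0) ∧ (p * X).rootMultiplicity 0 = 1 := by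
  have hmult : (p * X).rootMultiplicity 0 = p.rootMultiplicity 0 + 1 := by
    simpa using rootMultiplicity_mul_X_sub_C_pow (a := (0 : R)) (n := 1) hp
  simp only [hmult, Nat.add_eq_right, rootMultiplicity_eq_zero_iff, hp, imp_false, IsRoot.def,
    eval_mul, eval_X, mul_eq_zero]
  constructor
  · intro h
    exact ⟨fun μ => by simp [h μ], h 0⟩
  · rintro ⟨hroots, h0⟩ μ hμ
    exact h0 ((hroots μ).1 (Or.inl hμ) ▸ hμ)

/-- Let `W ⊂ V` be a codimension-one subspace of a finite-dimensional real vector space and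
`T : V → V` a linear map whose image is contained in `W`, with restriction `S : W → W`.
Then `S` has no real eigenvalues iff the only real eigenvalue of `T` is `0` and it has
algebraic multiplicity one. -/
theorem restriction_no_real_eigenvalues_iff
    (V : Type*) [AddCommGroup V] [Module ℝ V] [FiniteDimensional ℝ V]
    (W : Submodule ℝ V) (hW : Module.finrank ℝ W + 1 = Module.finrank ℝ V)
    (T : V →ₗ[ℝ] V) (hT : ∀ x : V, T x ∈ W) :
    (∀ μ : ℝ, ¬ Module.End.HasEigenvalue (T.restrict (fun x _ => hT x)) μ) ↔
      ((∀ μ : ℝ, Module.End.HasEigenvalue T μ ↔ μ = 0) ∧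
        (LinearMap.charpoly T).rootMultiplicity 0 = 1) := by
  simp only [Module.End.hasEigenvalue_iff_isRoot_charpoly,
    LinearMap.charpoly_eq_charpoly_restrict_mul_X hW T hT]
  exact forall_not_isRoot_iff_mul_X (LinearMap.charpoly_monic _).ne_zero
end

section
/- Let V be a finite-dimensional real vector space, W ⊂ V a codimension-one subspace, T : V → V a linear map with image contained in W, and S = T|_W : W → W. Then 0 is an eigenvalue of S if and only if 0 is an eigenvalue of T with algebraic multiplicity at least two. -/
/-!
The algebraic multiplicity of `0` for `T` is the dimension of the generalized kernel
`⋃ₙ ker Tⁿ`. Suppose `ker T` meets `W`. If it also meets `range T`, say in `T y ≠ 0`, then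
`y ∈ ker T² \ ker T`; if not, `range T ≠ W`, and rank–nullity gives `dim ker T ≥ 2`.
Conversely, if `ker T ∩ W = 0` then `T` is injective on `range T ⊆ W`, so the generalized kernel
is `ker T`, which meets the hyperplane `W` trivially and hence has dimension at most one.
-/

open Module LinearMap

namespace Module.End

variable {K V : Type*} [Field K] [AddCommGroup V] [Module K V]

theorem hasEigenvalue_zero_restrict_iff (T : End K V) {p : Submodule K V}
    (hT : ∀ x ∈ p, T x ∈ p) :
    HasEigenvalue (T.restrict hT) 0 ↔ ¬Disjoint (ker T) p := by
  rw [hasEigenvalue_iff, eigenspace_zero, ker_restrict, disjoint_comm,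
    Submodule.disjoint_iff_comap_eq_bot]

theorem maxGenEigenspace_zero_eq_ker_of_disjoint {T : End K V}
    (h : Disjoint (ker T) (range T)) : maxGenEigenspace T 0 = ker T := by
  have of_pow_apply_eq_zero : ∀ (k : ℕ) (z : V), (T ^ k) z = 0 → T z = 0 := by
    intro k
    induction k with
    | zero => simp
    | succ k ih =>
      intro z hz
      rw [pow_succ, mul_apply] at hz
      exact Submodule.disjoint_def.mp h (T z) (ih (T z) hz) (mem_range_self T z)
  refine le_antisymm (fun z hz => ?_) (eigenspace_zero T ▸ eigenspace_le_maxGenEigenspace)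
  obtain ⟨k, hk⟩ := (mem_maxGenEigenspace T 0 z).mp hz
  rw [zero_smul, sub_zero] at hk
  exact of_pow_apply_eq_zero k z hk

theorem ker_lt_ker_sq_of_not_disjoint {T : End K V}
    (h : ¬Disjoint (ker T) (range T)) : ker T < ker (T ^ 2) := by
  obtain ⟨_, ⟨hx, y, rfl⟩, hy⟩ := Submodule.exists_mem_ne_zero_of_ne_bot (disjoint_iff.not.mp h)
  refine SetLike.lt_iff_le_and_exists.mpr ⟨fun z hz => ?_, y, ?_, hy⟩
  · rw [mem_ker] at hz ⊢
    rw [sq, mul_apply, hz, map_zero]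
  · rw [mem_ker, sq, mul_apply]
    exact hx

variable [FiniteDimensional K V] {W : Submodule K V}

theorem two_le_finrank_maxGenEigenspace_zero (hW : finrank K W + 1 = finrank K V)
    {T : End K V} (hTW : range T ≤ W) (h : ¬Disjoint (ker T) W) :
    2 ≤ finrank K (maxGenEigenspace T 0) := by
  have hrank := finrank_range_add_finrank_ker T
  by_cases hd : Disjoint (ker T) (range T)
  · have hlt : range T < W := lt_of_le_of_ne hTW (fun he => h (he ▸ hd))
    have := Submodule.finrank_lt_finrank_of_lt hlt
    rw [maxGenEigenspace_zero_eq_ker_of_disjoint hd]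
    omega
  · have hker : 1 ≤ finrank K (ker T) :=
      Submodule.one_le_finrank_iff.mpr fun hb => h (hb ▸ disjoint_bot_left)
    have hlt := Submodule.finrank_lt_finrank_of_lt (ker_lt_ker_sq_of_not_disjoint hd)
    have hle : ker (T ^ 2) ≤ maxGenEigenspace T 0 :=
      genEigenspace_zero_nat T 2 ▸ genEigenspace_le_maximal T 0 2
    have := Submodule.finrank_mono hle
    omega

theorem not_disjoint_ker_of_two_le_finrank_maxGenEigenspace_zero
    (hW : finrank K W + 1 = finrank K V) {T : End K V} (hTW : range T ≤ W)
    (h : 2 ≤ finrank K (maxGenEigenspace T 0)) : ¬Disjoint (ker T) W := by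
  intro hd
  rw [maxGenEigenspace_zero_eq_ker_of_disjoint (hd.mono_right hTW)] at h
  have := Submodule.finrank_add_finrank_le_of_disjoint hd
  omega

end Module.End

open Module.End in
/-- Let `W ⊂ V` be a codimension-one subspace of a finite-dimensional real vector space and
`T : V → V` a linear map whose image is contained in `W`, with restriction `S : W → W`.
Then `0` is an eigenvalue of `S` iff `0` is an eigenvalue of `T` with algebraic multiplicity
at least two. -/
theorem restriction_hasEigenvalue_zero_iff
    (V : Type*) [AddCommGroup V] [Module ℝ V] [FiniteDimensional ℝ V]
    (W : Submodule ℝ V) (hW : Module.finrank ℝ W + 1 = Module.finrank ℝ V)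
    (T : V →ₗ[ℝ] V) (hT : ∀ x : V, T x ∈ W) :
    Module.End.HasEigenvalue (T.restrict (fun x _ => hT x)) 0 ↔
      (Module.End.HasEigenvalue T 0 ∧ 2 ≤ (LinearMap.charpoly T).rootMultiplicity 0) := by
  have hTW : range T ≤ W := range_le_iff_comap.mpr (Submodule.eq_top_iff'.mpr hT)
  rw [hasEigenvalue_zero_restrict_iff, ← finrank_maxGenEigenspace_eq]
  refine ⟨fun h => ⟨?_, two_le_finrank_maxGenEigenspace_zero hW hTW h⟩,
    fun ⟨_, h⟩ => not_disjoint_ker_of_two_le_finrank_maxGenEigenspace_zero hW hTW h⟩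
  rw [hasEigenvalue_iff, eigenspace_zero]
  exact fun hb => h (hb ▸ disjoint_bot_left)
end

section
/- Let v(x,y,z) = (x²−y²−z²+1, 2xy+2z, 2xz−2y)/(x²+y²+z²+1) on ℝ³. Then v is invariant under rotations about the x-axis: for every rotation R of ℝ³ fixing the x-axis, v(R p) = R(v(p)) for all p ∈ ℝ³. -/
/-- The point `(a,b,c)` of Euclidean 3-space. -/
noncomputable def pt3 (a b c : ℝ) : EuclideanSpace ℝ (Fin 3) :=
  (WithLp.equiv 2 (Fin 3 → ℝ)).symm ![a, b, c]

/-- The stereographic projection of the Hopf vector field: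
`v(x,y,z) = (x²−y²−z²+1, 2xy+2z, 2xz−2y)/(x²+y²+z²+1)`. -/
noncomputable def hopfField (p : EuclideanSpace ℝ (Fin 3)) : EuclideanSpace ℝ (Fin 3) :=
  ((p 0) ^ 2 + (p 1) ^ 2 + (p 2) ^ 2 + 1)⁻¹ •
    pt3 ((p 0) ^ 2 - (p 1) ^ 2 - (p 2) ^ 2 + 1)
      (2 * p 0 * p 1 + 2 * p 2)
      (2 * p 0 * p 2 - 2 * p 1)

/-- Rotation by angle `θ` about the `x`-axis:
`(x,y,z) ↦ (x, y cos θ − z sin θ, y sin θ + z cos θ)`. -/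
noncomputable def rotX (θ : ℝ) (p : EuclideanSpace ℝ (Fin 3)) : EuclideanSpace ℝ (Fin 3) :=
  pt3 (p 0) (p 1 * Real.cos θ - p 2 * Real.sin θ) (p 1 * Real.sin θ + p 2 * Real.cos θ)

/-!
Identify `(y, z)` with `w = y + i z ∈ ℂ`. Then
`v(x, w) = (x² − |w|² + 1, 2 (x − i) w) / (x² + |w|² + 1)`,
and a rotation about the `x`-axis is `w ↦ e^{iθ} w`. It preserves `|w|`, hence the first
component and the denominator, and it commutes with multiplication by `2 (x − i)`.
-/

open Real

section pt3

variable (a b c : ℝ)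

@[simp] theorem pt3_apply_zero : pt3 a b c 0 = a := rfl

@[simp] theorem pt3_apply_one : pt3 a b c 1 = b := rfl

@[simp] theorem pt3_apply_two : pt3 a b c 2 = c := rfl

theorem smul_pt3 (t : ℝ) : t • pt3 a b c = pt3 (t * a) (t * b) (t * c) := by
  ext i
  fin_cases i <;> rfl

end pt3

theorem rotX_pt3 (θ a b c : ℝ) :
    rotX θ (pt3 a b c) = pt3 a (b * cos θ - c * sin θ) (b * sin θ + c * cos θ) := rfl

theorem rotX_smul (θ t : ℝ) (p : EuclideanSpace ℝ (Fin 3)) :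
    rotX θ (t • p) = t • rotX θ p := by
  simp only [rotX, smul_pt3, PiLp.smul_apply, smul_eq_mul]
  congr 1 <;> ring

theorem sq_add_sq_rotate (θ y z : ℝ) :
    (y * cos θ - z * sin θ) ^ 2 + (y * sin θ + z * cos θ) ^ 2 = y ^ 2 + z ^ 2 := by
  linear_combination (y ^ 2 + z ^ 2) * sin_sq_add_cos_sq θ

/-- The stereographically projected Hopf field is invariant under every rotation about the
`x`-axis. -/
theorem hopfField_rotX_invariant (θ : ℝ) (p : EuclideanSpace ℝ (Fin 3)) :
    hopfField (rotX θ p) = rotX θ (hopfField p) := by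
  have hρ := sq_add_sq_rotate θ (p 1) (p 2)
  simp only [hopfField, rotX_smul, rotX_pt3]
  simp only [rotX, pt3_apply_zero, pt3_apply_one, pt3_apply_two]
  congr 1
  · rw [add_assoc (p 0 ^ 2), hρ, ← add_assoc]
  · congr 1
    · linear_combination -hρ
    · ring
    · ring
end
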